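/- arXiv:1309.0222 — 4 statements merged into one kernel-verified Lean document; each statement's English description precedes it below -/
import Mathlib

section
/- Let K be continuous, antisymmetric, and L-Lipschitz in each variable uniformly in the other. Then for every Z_N^in ∈ (ℝ^d)^N, the time-dependent empirical measure μ_N(t) = (1/N)∑_{k=1}^N δ_{z_k(t)}, where (z_1(t),…,z_N(t)) solves the N-particle ODE ż_k = (1/N)∑_l K(z_k, z_l) with initial data Z_N^in, is a weak solution of the mean field equation ∂_t μ + div(μ 𝒦μ) = 0 with initial datum μ_{Z_N^in}. -/
/-!
Integration against an empirical measure is averaging over the particles, so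
`∫ φ dμ_N(t) = (1/N) ∑ₖ φ(zₖ(t))` and the weak formulation is the chain rule for each `φ ∘ zₖ`:
the field `𝒦μ_N(t)` evaluated at `zₖ(t)` is exactly the velocity `żₖ(t)` of the particle system.
-/

open MeasureTheory ENNReal

/-- The empirical measure `μ_{Z_N} = (1/N) ∑_k δ_{z_k}` of an `N`-tuple of points. -/
noncomputable def empiricalMeasure {E : Type*} [MeasurableSpace E] {N : ℕ}
    (Z : Fin N → E) : Measure E :=
  (N : ℝ≥0∞)⁻¹ • ∑ k, Measure.dirac (Z k)

section

variable {E F : Type*} [MeasurableSpace E] [MeasurableSingletonClass E]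
  [NormedAddCommGroup F] [NormedSpace ℝ F] [CompleteSpace F] {N : ℕ}

theorem integral_empiricalMeasure (Z : Fin N → E) (f : E → F) :
    ∫ w, f w ∂(empiricalMeasure Z) = (N : ℝ)⁻¹ • ∑ k, f (Z k) := by
  rw [empiricalMeasure, integral_smul_measure,
    integral_finsetSum_measure fun k _ => integrable_dirac (by simp)]
  simp

theorem hasDerivAt_integral_empiricalMeasure [NormedAddCommGroup E] [NormedSpace ℝ E]
    {z : ℝ → Fin N → E} {v : Fin N → E} {t : ℝ} (hz : ∀ k, HasDerivAt (fun s => z s k) (v k) t)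
    {φ : E → F} (hφ : ∀ k, DifferentiableAt ℝ φ (z t k)) :
    HasDerivAt (fun s => ∫ w, φ w ∂(empiricalMeasure (z s)))
      ((N : ℝ)⁻¹ • ∑ k, fderiv ℝ φ (z t k) (v k)) t := by
  simp_rw [integral_empiricalMeasure]
  exact (HasDerivAt.fun_sum fun k _ => (hφ k).hasFDerivAt.comp_hasDerivAt t (hz k)).const_smul _

end

theorem stmt_10_general (d N : ℕ)
    (K : EuclideanSpace ℝ (Fin d) × EuclideanSpace ℝ (Fin d) → EuclideanSpace ℝ (Fin d))
    (Zin : Fin N → EuclideanSpace ℝ (Fin d))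
    (z : ℝ → Fin N → EuclideanSpace ℝ (Fin d))
    (hz0 : z 0 = Zin)
    (hODE : ∀ k t, HasDerivAt (fun s => z s k)
      ((N : ℝ)⁻¹ • ∑ l, K (z t k, z t l)) t) :
    (empiricalMeasure (z 0) = empiricalMeasure Zin) ∧
    ∀ φ : EuclideanSpace ℝ (Fin d) → ℝ, ContDiff ℝ 1 φ → HasCompactSupport φ →
      ∀ t : ℝ, HasDerivAt (fun s => ∫ w, φ w ∂(empiricalMeasure (z s)))
        (∫ w, fderiv ℝ φ w (∫ w', K (w, w') ∂(empiricalMeasure (z t)))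
          ∂(empiricalMeasure (z t))) t := by
  refine ⟨by rw [hz0], fun φ hφ _ t => ?_⟩
  simp_rw [integral_empiricalMeasure (z t)]
  exact hasDerivAt_integral_empiricalMeasure (hODE · t)
    fun k => hφ.differentiable one_ne_zero (z t k)

/-- The time-dependent empirical measure of a solution of the `N`-particle ODE system
`żₖ = (1/N) ∑_l K(zₖ, z_l)` is a weak solution of the mean-field equation
`∂ₜμ + div(μ 𝒦μ) = 0` with initial datum `μ_{Z_N^in}`. -/
theorem stmt_10 (d N : ℕ) (hN : 0 < N) (L : ℝ) (hL : 0 < L)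
    (K : EuclideanSpace ℝ (Fin d) × EuclideanSpace ℝ (Fin d) → EuclideanSpace ℝ (Fin d))
    (hKcont : Continuous K)
    (hKanti : ∀ z z', K (z, z') + K (z', z) = 0)
    (hKlip1 : ∀ z' z₁ z₂, ‖K (z₁, z') - K (z₂, z')‖ ≤ L * ‖z₁ - z₂‖)
    (hKlip2 : ∀ z z₁ z₂, ‖K (z, z₁) - K (z, z₂)‖ ≤ L * ‖z₁ - z₂‖)
    (Zin : Fin N → EuclideanSpace ℝ (Fin d))
    (z : ℝ → Fin N → EuclideanSpace ℝ (Fin d))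
    (hz0 : z 0 = Zin)
    (hODE : ∀ k t, HasDerivAt (fun s => z s k)
      ((N : ℝ)⁻¹ • ∑ l, K (z t k, z t l)) t) :
    (empiricalMeasure (z 0) = empiricalMeasure Zin) ∧
    ∀ φ : EuclideanSpace ℝ (Fin d) → ℝ, ContDiff ℝ 1 φ → HasCompactSupport φ →
      ∀ t : ℝ, HasDerivAt (fun s => ∫ w, φ w ∂(empiricalMeasure (z s)))
        (∫ w, fderiv ℝ φ w (∫ w', K (w, w') ∂(empiricalMeasure (z t)))
          ∂(empiricalMeasure (z t))) t :=
  stmt_10_general d N K Zin z hz0 hODE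
end

section
/- Let P_N be a symmetric probability measure on (ℝ^d)^N and Z_N ↦ μ_{Z_N} the empirical measure map. Then for every bounded measurable φ_m on (ℝ^d)^m and m ≤ N: |⟨∫ μ_{Z_N}^{⊗m} P_N(dZ_N) − P_{N:m}, φ_m⟩| ≤ (m(m−1)/N)·‖φ_m‖_∞. -/
/-!
Expanding the product, `μ_Z^{⊗m}` is the uniform average of `δ_{Z ∘ k}` over all maps
`k : Fin m → Fin N`, so `∫ μ_Z^{⊗m} P(dZ)` is the average of the laws of `Z ∘ k` under `P`.
By exchangeability every injective `k` gives the marginal `P_{N:m}`, so only the non-injective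
`k` contribute, each by at most `2 ‖φ‖_∞`. There are
`N^m - N(N-1)⋯(N-m+1) ≤ (m choose 2) N^(m-1)` of them, which gives the bound
`m(m-1)/N ‖φ‖_∞`.
-/

open MeasureTheory ENNReal

/-- The `m`-th marginal of a measure on `(ℝ^d)^N`: the push-forward under the
projection onto the first `m` coordinates. -/
noncomputable def marginal {E : Type*} [MeasurableSpace E] {N : ℕ} (m : ℕ) (h : m ≤ N)
    (P : Measure (Fin N → E)) : Measure (Fin m → E) :=
  P.map fun Z => fun i : Fin m => Z (Fin.castLE h i)

open Finset

lemma Nat.pow_le_descFactorial_add_choose_two_mul (n : ℕ) :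
    ∀ k : ℕ, n ^ k ≤ n.descFactorial k + k.choose 2 * n ^ (k - 1)
  | 0 => by simp
  | k + 1 => by
    have ih := Nat.pow_le_descFactorial_add_choose_two_mul n k
    have hk : k * n.descFactorial k ≤ k * n ^ k :=
      Nat.mul_le_mul_left k (n.descFactorial_le_pow k)
    have hsplit :
        n * n.descFactorial k ≤ (n - k) * n.descFactorial k + k * n.descFactorial k := by
      rw [← add_mul]; exact Nat.mul_le_mul_right _ (by omega)
    have hpow : n * (k.choose 2 * n ^ (k - 1)) ≤ k.choose 2 * n ^ k := by
      rcases k with _ | k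
      · simp
      · rw [Nat.add_sub_cancel, pow_succ]; linarith
    rw [Nat.descFactorial_succ, Nat.choose_succ_succ', Nat.choose_one_right, Nat.add_sub_cancel,
      pow_succ']
    linarith [Nat.mul_le_mul_left n ih]

lemma card_not_injective_le (α β : Type*) [Fintype α] [Fintype β] [DecidableEq α]
    [DecidableEq β] :
    #{k : α → β | ¬ Function.Injective k} ≤
      (Fintype.card α).choose 2 * Fintype.card β ^ (Fintype.card α - 1) := by
  have hinj : #{k : α → β | Function.Injective k} =
      (Fintype.card β).descFactorial (Fintype.card α) := by
    rw [← Fintype.card_subtype, Fintype.card_congr (Equiv.subtypeInjectiveEquivEmbedding _ _),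
      Fintype.card_embedding_eq]
  have htotal := card_filter_add_card_filter_not (s := (univ : Finset (α → β)))
    (fun k => Function.Injective k)
  rw [card_univ, Fintype.card_fun, hinj] at htotal
  have := (Fintype.card β).pow_le_descFactorial_add_choose_two_mul (Fintype.card α)
  omega

lemma card_not_injective_div_le (m N : ℕ) :
    (#{k : Fin m → Fin N | ¬ Function.Injective k} : ℝ) / N ^ m ≤ m * (m - 1) / (2 * N) := by
  have hcard : (#{k : Fin m → Fin N | ¬ Function.Injective k} : ℝ) ≤
      m * (m - 1) / 2 * N ^ (m - 1) := by
    have := card_not_injective_le (Fin m) (Fin N)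
    rw [Fintype.card_fin, Fintype.card_fin] at this
    rw [← Nat.cast_choose_two]
    exact_mod_cast this
  rcases m with _ | m
  · rw [pow_zero, div_one]; simpa using hcard
  rcases Nat.eq_zero_or_pos N with rfl | hN
  · simp
  rw [div_le_div_iff₀ (by positivity) (by positivity), pow_succ]
  calc _ ≤ (m + 1 : ℕ) * ((m + 1 : ℕ) - 1) / 2 * (N : ℝ) ^ m * (2 * N) := by
        gcongr; simpa using hcard
    _ = _ := by ring

lemma abs_inv_card_mul_sum_sub_le {ι : Type*} [Fintype ι] [Nonempty ι] (p : ι → Prop)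
    [DecidablePred p] {f : ι → ℝ} {a B : ℝ} (hp : ∀ i, p i → f i = a)
    (hB : ∀ i, |f i - a| ≤ B) :
    |(Fintype.card ι : ℝ)⁻¹ * ∑ i, f i - a| ≤ #{i | ¬ p i} / Fintype.card ι * B := by
  have hcard : (Fintype.card ι : ℝ) ≠ 0 := by positivity
  have hsum : (Fintype.card ι : ℝ)⁻¹ * ∑ i, f i - a =
      (Fintype.card ι : ℝ)⁻¹ * ∑ i with ¬ p i, (f i - a) := by
    have hgood : ∑ i with ¬ p i, (f i - a) = ∑ i, (f i - a) :=
      sum_filter_of_ne fun i _ hi hpi => hi (by rw [hp i hpi, sub_self])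
    rw [hgood, sum_sub_distrib, sum_const, card_univ, nsmul_eq_mul, mul_sub,
      inv_mul_cancel_left₀ hcard]
  rw [hsum, abs_mul, abs_inv, Nat.abs_cast, div_eq_inv_mul, mul_assoc]
  gcongr
  calc _ ≤ ∑ i with ¬ p i, |f i - a| := abs_sum_le_sum_abs _ _
    _ ≤ ∑ i with ¬ p i, B := sum_le_sum fun i _ => hB i
    _ = _ := by rw [sum_const, nsmul_eq_mul]

lemma MeasureTheory.Measure.bind_smul_sum_dirac {α β ι : Type*} [MeasurableSpace α]
    [MeasurableSpace β] [Fintype ι] (P : Measure α) (c : ℝ≥0∞) {g : ι → α → β}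
    (hg : ∀ i, Measurable (g i)) :
    P.bind (fun a => c • ∑ i, Measure.dirac (g i a)) = c • ∑ i, P.map (g i) := by
  have hind : ∀ s, MeasurableSet s → ∀ i,
      Measurable fun a => (g i ⁻¹' s).indicator (1 : α → ℝ≥0∞) a :=
    fun s hs i => measurable_one.indicator (hg i hs)
  have hdirac : ∀ s, MeasurableSet s → ∀ i a,
      Measure.dirac (g i a) s = (g i ⁻¹' s).indicator 1 a := fun s hs i a => by
    rw [Measure.dirac_apply' _ hs]; rfl
  ext s hs
  rw [Measure.bind_apply hs]
  · simp only [Measure.smul_apply, Measure.finsetSum_apply, smul_eq_mul, hdirac s hs]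
    rw [lintegral_const_mul _ (Finset.measurable_sum _ fun i _ => hind s hs i),
      lintegral_finsetSum _ fun i _ => hind s hs i]
    simp only [lintegral_indicator_one (hg _ hs), Measure.map_apply (hg _) hs]
  · refine (Measure.measurable_measure.2 fun s hs => ?_).aemeasurable
    simp only [Measure.smul_apply, Measure.finsetSum_apply, smul_eq_mul, hdirac s hs]
    exact (Finset.measurable_sum _ fun i _ => hind s hs i).const_mul _

section EmpiricalMeasure

variable {E : Type*} [MeasurableSpace E] {N m : ℕ}

instance (Z : Fin N → E) : IsFiniteMeasure (empiricalMeasure Z) :=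
  ⟨by
    simpa [empiricalMeasure] using (ENNReal.inv_mul_le_one (N : ℝ≥0∞)).trans_lt one_lt_top⟩

lemma pi_empiricalMeasure (Z : Fin N → E) :
    Measure.pi (fun _ : Fin m => empiricalMeasure Z) =
      ((N : ℝ≥0∞) ^ m)⁻¹ • ∑ k : Fin m → Fin N, Measure.dirac (Z ∘ k) := by
  classical
  refine Measure.pi_eq fun s hs => ?_
  simp only [empiricalMeasure, Measure.smul_apply, Measure.finsetSum_apply, smul_eq_mul,
    Measure.dirac_apply' _ (MeasurableSet.univ_pi hs), Measure.dirac_apply' _ (hs _),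
    Finset.prod_mul_distrib, Finset.prod_const, Finset.prod_univ_sum, card_univ, Fintype.card_fin,
    ENNReal.inv_pow, Fintype.piFinset_univ]
  simp only [Set.indicator_apply, Set.mem_univ_pi, Function.comp_apply, Pi.one_apply,
    Fintype.prod_boole]
  congr!

lemma bind_pi_empiricalMeasure (P : Measure (Fin N → E)) :
    P.bind (fun Z => Measure.pi fun _ : Fin m => empiricalMeasure Z) =
      ((N : ℝ≥0∞) ^ m)⁻¹ • ∑ k : Fin m → Fin N, P.map (· ∘ k) := by
  simp_rw [pi_empiricalMeasure]
  exact Measure.bind_smul_sum_dirac P _ fun k => by fun_prop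

lemma integral_bind_pi_empiricalMeasure {G : Type*} [NormedAddCommGroup G] [NormedSpace ℝ G]
    (P : Measure (Fin N → E)) [IsFiniteMeasure P] {φ : (Fin m → E) → G} {C : ℝ}
    (hφ : StronglyMeasurable φ) (hφC : ∀ x, ‖φ x‖ ≤ C) :
    ∫ x, φ x ∂(P.bind fun Z => Measure.pi fun _ : Fin m => empiricalMeasure Z) =
      ((N : ℝ) ^ m)⁻¹ • ∑ k : Fin m → Fin N, ∫ Z, φ (Z ∘ k) ∂P := by
  have hmeas : ∀ k : Fin m → Fin N, Measurable fun Z : Fin N → E => Z ∘ k := by fun_prop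
  have hint : ∀ k : Fin m → Fin N, Integrable φ (P.map (· ∘ k)) := fun k =>
    (integrable_const C).mono' hφ.aestronglyMeasurable (.of_forall hφC)
  rw [bind_pi_empiricalMeasure, integral_smul_measure,
    integral_finsetSum_measure fun k _ => hint k]
  simp [integral_map (hmeas _).aemeasurable hφ.aestronglyMeasurable]

end EmpiricalMeasure

lemma map_comp_eq_marginal_of_injective {E : Type*} [MeasurableSpace E] {N m : ℕ} (h : m ≤ N)
    {P : Measure (Fin N → E)} (hsym : ∀ σ : Equiv.Perm (Fin N), P.map (fun Z => Z ∘ σ) = P)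
    {k : Fin m → Fin N} (hk : Function.Injective k) :
    P.map (· ∘ k) = marginal m h P := by
  obtain ⟨σ, hσ⟩ := Equiv.Perm.exists_extending_pair _ _ (Fin.castLE_injective h) hk
  have hk : k = σ ∘ Fin.castLE h := funext fun i => (hσ i).symm
  conv_rhs => rw [marginal, ← hsym σ]
  rw [Measure.map_map (by fun_prop) (by fun_prop), hk]
  rfl

theorem stmt_12_general (d N m : ℕ) (hmN : m ≤ N)
    (P : Measure (Fin N → EuclideanSpace ℝ (Fin d))) [IsProbabilityMeasure P]
    (hsym : ∀ σ : Equiv.Perm (Fin N), P.map (fun Z => Z ∘ σ) = P)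
    (φ : (Fin m → EuclideanSpace ℝ (Fin d)) → ℝ) (C : ℝ)
    (hφmeas : Measurable φ) (hφbdd : ∀ x, |φ x| ≤ C) :
    |(∫ x, φ x ∂(P.bind fun Z => Measure.pi fun _ : Fin m => empiricalMeasure Z)) -
        ∫ x, φ x ∂(marginal m hmN P)| ≤
      (m : ℝ) * ((m : ℝ) - 1) / N * C := by
  have : Nonempty (Fin m → Fin N) := ⟨Fin.castLE hmN⟩
  have hC : 0 ≤ C := (abs_nonneg _).trans (hφbdd 0)
  have hI : ∀ k : Fin m → Fin N, |∫ Z, φ (Z ∘ k) ∂P| ≤ C := fun k => by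
    simpa using norm_integral_le_of_norm_le_const (μ := P)
      (.of_forall fun Z => (Real.norm_eq_abs _).trans_le (hφbdd (Z ∘ k)))
  have hsymI : ∀ k : Fin m → Fin N, Function.Injective k →
      ∫ Z, φ (Z ∘ k) ∂P = ∫ x, φ x ∂(marginal m hmN P) := fun k hk => by
    have hk_meas : Measurable fun Z : Fin N → EuclideanSpace ℝ (Fin d) => Z ∘ k := by fun_prop
    rw [← map_comp_eq_marginal_of_injective hmN hsym hk,
      integral_map hk_meas.aemeasurable hφmeas.aestronglyMeasurable]
  have hmarg := (hsymI _ (Fin.castLE_injective hmN)).symm ▸ hI (Fin.castLE hmN)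
  rw [integral_bind_pi_empiricalMeasure P hφmeas.stronglyMeasurable hφbdd]
  calc _ = |(Fintype.card (Fin m → Fin N) : ℝ)⁻¹ * ∑ k, ∫ Z, φ (Z ∘ k) ∂P -
          ∫ x, φ x ∂(marginal m hmN P)| := by simp
    _ ≤ #{k : Fin m → Fin N | ¬ Function.Injective k} / Fintype.card (Fin m → Fin N) *
          (2 * C) :=
        abs_inv_card_mul_sum_sub_le _ hsymI fun k =>
          (abs_sub _ _).trans (by linarith [hI k])
    _ ≤ m * (m - 1) / (2 * N) * (2 * C) := by
        refine mul_le_mul_of_nonneg_right ?_ (by positivity)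
        simpa using card_not_injective_div_le m N
    _ = _ := by ring

/-- For a symmetric probability measure `P_N` on `(ℝ^d)^N` and a bounded measurable
`φ_m` on `(ℝ^d)^m`, the pairing of `∫ μ_{Z_N}^{⊗m} P_N(dZ_N) − P_{N:m}` against `φ_m`
is bounded by `(m(m-1)/N) ‖φ_m‖_∞`. -/
theorem stmt_12 (d N m : ℕ) (hm : 1 ≤ m) (hmN : m ≤ N)
    (P : Measure (Fin N → EuclideanSpace ℝ (Fin d))) [IsProbabilityMeasure P]
    (hsym : ∀ σ : Equiv.Perm (Fin N), P.map (fun Z => Z ∘ σ) = P)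
    (φ : (Fin m → EuclideanSpace ℝ (Fin d)) → ℝ) (C : ℝ)
    (hφmeas : Measurable φ) (hφbdd : ∀ x, |φ x| ≤ C) :
    |(∫ x, φ x ∂(P.bind fun Z => Measure.pi fun _ : Fin m => empiricalMeasure Z)) -
        ∫ x, φ x ∂(marginal m hmN P)| ≤
      (m : ℝ) * ((m : ℝ) - 1) / N * C :=
  stmt_12_general d N m hmN P hsym φ C hφmeas hφbdd
end

section
/- For symmetric probability measures P_M on (ℝ^d)^M and Q_N on (ℝ^d)^N with finite first moments, define Dist_{MK,1}(P_M, Q_N) = inf over couplings ρ ∈ Π(P_M, Q_N) of ∬ W₁(μ_{X_M}, μ_{Y_N}) ρ(dX_M, dY_N). If P_M(t) = T^M_t # P_M^in and Q_N(t) = T^N_t # Q_N^in are the push-forwards under the M- and N-particle flows of the Lipschitz mean-field dynamics, then Dist_{MK,1}(P_M(t), Q_N(t)) ≤ e^{2L|t|} Dist_{MK,1}(P_M^in, Q_N^in) for all t ∈ ℝ. -/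
open MeasureTheory ENNReal

/-- The Monge–Kantorovich (Wasserstein-1) distance, defined as the infimum over
couplings of the expected distance. -/
noncomputable def W1 {E : Type*} [MeasurableSpace E] [PseudoMetricSpace E]
    (μ ν : Measure E) : ℝ :=
  sInf {c | ∃ π : Measure (E × E),
    π.map Prod.fst = μ ∧ π.map Prod.snd = ν ∧ c = ∫ p, dist p.1 p.2 ∂π}

/-- The distance `Dist_{MK,1}` between symmetric probability measures on `(ℝ^d)^M`
and `(ℝ^d)^N`: the infimum over couplings `ρ` of `∬ W₁(μ_{X_M}, μ_{Y_N}) dρ`. -/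
noncomputable def DistMK {E : Type*} [MeasurableSpace E] [PseudoMetricSpace E]
    {M N : ℕ} (P : Measure (Fin M → E)) (Q : Measure (Fin N → E)) : ℝ :=
  sInf {c | ∃ ρ : Measure ((Fin M → E) × (Fin N → E)),
    ρ.map Prod.fst = P ∧ ρ.map Prod.snd = Q ∧
    c = ∫ p, W1 (empiricalMeasure p.1) (empiricalMeasure p.2) ∂ρ}

open Finset

/-!
Couple `P_M^in` and `Q_N^in` by `ρ` and push `ρ` forward by the two flows: it suffices to show
`W₁(μ_{T^M_t X}, μ_{T^N_t Y}) ≤ e^{2L|t|} W₁(μ_X, μ_Y)` pointwise, together with continuity of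
`(X, Y) ↦ W₁(μ_X, μ_Y)` and the first-moment bound that make the costs integrable.

Couplings of two empirical measures are exactly coupling matrices `a` on `Fin M × Fin N` (row sums
`1/M`, column sums `1/N`), up to the multiplicities of repeated points. Given such an `a`, the
families `z_{(k,l)} = x_k(t)` and `z'_{(k,l)} = y_l(t)` solve the *same* weighted mean-field system
`ż_p = ∑_q a_q K(z_p, z_q)`, whose vector field is `2L`-Lipschitz for the weighted distance
`∑_p a_p ‖z_p - z'_p‖`. Grönwall then bounds the transport cost `∑ a_{kl} ‖x_k(t) - y_l(t)‖` by
`e^{2L|t|}` times its initial value (Dobrushin's estimate).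
-/

section Gronwall

variable {ι E : Type*} [Fintype ι] [NormedAddCommGroup E] [NormedSpace ℝ E]

theorem sum_norm_le_exp_mul_of_sum_norm_deriv_le {g g' : ι → ℝ → E}
    (hg : ∀ i t, HasDerivAt (g i) (g' i t) t) {C : ℝ}
    (hbound : ∀ t, ∑ i, ‖g' i t‖ ≤ C * ∑ i, ‖g i t‖) {t : ℝ} (ht : 0 ≤ t) :
    ∑ i, ‖g i t‖ ≤ Real.exp (C * t) * ∑ i, ‖g i 0‖ := by
  -- Gronwall in `ℓ¹(ι, E)`, whose norm is the sum of the norms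
  let f : ℝ → PiLp 1 (fun _ : ι => E) := fun s => WithLp.toLp 1 fun i => g i s
  have hnorm (s : ℝ) : ‖f s‖ = ∑ i, ‖g i s‖ := PiLp.norm_eq_of_L1 _
  have hf (s : ℝ) : HasDerivAt f (WithLp.toLp 1 fun i => g' i s) s :=
    (PiLp.continuousLinearEquiv 1 ℝ (fun _ : ι => E)).symm.hasFDerivAt.comp_hasDerivAt s
      (hasDerivAt_pi.2 fun i => hg i s)
  have := norm_le_gronwallBound_of_norm_deriv_right_le (f := f) (ε := 0)
    (fun s _ => (hf s).continuousAt.continuousWithinAt) (fun s _ => (hf s).hasDerivWithinAt)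
    le_rfl (fun s _ => by simpa [hnorm, PiLp.norm_eq_of_L1] using hbound s) t ⟨ht, le_rfl⟩
  simpa [gronwallBound_ε0, hnorm, mul_comm] using this

theorem sum_norm_le_exp_mul_abs_of_sum_norm_deriv_le {g g' : ι → ℝ → E}
    (hg : ∀ i t, HasDerivAt (g i) (g' i t) t) {C : ℝ}
    (hbound : ∀ t, ∑ i, ‖g' i t‖ ≤ C * ∑ i, ‖g i t‖) (t : ℝ) :
    ∑ i, ‖g i t‖ ≤ Real.exp (C * |t|) * ∑ i, ‖g i 0‖ := by
  rcases le_total 0 t with ht | ht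
  · rw [abs_of_nonneg ht]
    exact sum_norm_le_exp_mul_of_sum_norm_deriv_le hg hbound ht
  · have hrev (i : ι) (s : ℝ) : HasDerivAt (fun s => g i (-s)) (-g' i (-s)) s := by
      simpa [Function.comp_def] using (hg i (-s)).scomp s (hasDerivAt_neg s)
    simpa [abs_of_nonpos ht] using sum_norm_le_exp_mul_of_sum_norm_deriv_le hrev
      (fun s => by simpa using hbound (-s)) (neg_nonneg.2 ht)

end Gronwall

section MeanField

variable {ι κ E : Type*} [Fintype ι] [Fintype κ] [NormedAddCommGroup E] [NormedSpace ℝ E]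

def meanFieldVelocity (K : E × E → E) (w : ι → ℝ) (z : ι → E) (i : ι) : E :=
  ∑ j, w j • K (z i, z j)

/-- The weighted empirical measure `∑_j w_j δ_{z_j}` of such a trajectory solves the mean-field
equation. -/
def IsMeanFieldTrajectory (K : E × E → E) (w : ι → ℝ) (Z : ι → ℝ → E) : Prop :=
  ∀ i t, HasDerivAt (Z i) (meanFieldVelocity K w (fun j => Z j t) i) t

theorem isMeanFieldTrajectory_const_iff {K : E × E → E} {c : ℝ} {Z : ι → ℝ → E} :
    IsMeanFieldTrajectory K (fun _ => c) Z ↔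
      ∀ i t, HasDerivAt (Z i) (c • ∑ j, K (Z i t, Z j t)) t := by
  simp only [IsMeanFieldTrajectory, meanFieldVelocity, Finset.smul_sum]

theorem IsMeanFieldTrajectory.comp_fst {K : E × E → E} {v : ι → ℝ} {w : ι × κ → ℝ}
    (hw : ∀ i, ∑ j, w (i, j) = v i) {Z : ι → ℝ → E} (hZ : IsMeanFieldTrajectory K v Z) :
    IsMeanFieldTrajectory K w fun p => Z p.1 := by
  intro p t
  convert hZ p.1 t using 1
  simp only [meanFieldVelocity, Fintype.sum_prod_type, ← Finset.sum_smul, hw]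

theorem IsMeanFieldTrajectory.comp_snd {K : E × E → E} {v : κ → ℝ} {w : ι × κ → ℝ}
    (hw : ∀ j, ∑ i, w (i, j) = v j) {Z : κ → ℝ → E} (hZ : IsMeanFieldTrajectory K v Z) :
    IsMeanFieldTrajectory K w fun p => Z p.2 := by
  intro p t
  convert hZ p.2 t using 1
  simp only [meanFieldVelocity, Fintype.sum_prod_type_right, ← Finset.sum_smul, hw]

variable {L : ℝ} {K : E × E → E} {w : ι → ℝ}

theorem norm_meanFieldVelocity_sub_le
    (hK₁ : ∀ z' z₁ z₂, ‖K (z₁, z') - K (z₂, z')‖ ≤ L * ‖z₁ - z₂‖)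
    (hK₂ : ∀ z z₁ z₂, ‖K (z, z₁) - K (z, z₂)‖ ≤ L * ‖z₁ - z₂‖)
    (hw₀ : ∀ i, 0 ≤ w i) (hw₁ : ∑ i, w i = 1) (z z' : ι → E) (i : ι) :
    ‖meanFieldVelocity K w z i - meanFieldVelocity K w z' i‖
      ≤ L * ‖z i - z' i‖ + L * ∑ j, w j * ‖z j - z' j‖ := calc
  _ ≤ ∑ j, w j * (L * ‖z i - z' i‖ + L * ‖z j - z' j‖) := by
    rw [meanFieldVelocity, meanFieldVelocity, ← Finset.sum_sub_distrib]
    refine (norm_sum_le _ _).trans <| Finset.sum_le_sum fun j _ => ?_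
    rw [← smul_sub, norm_smul, Real.norm_of_nonneg (hw₀ j)]
    exact mul_le_mul_of_nonneg_left ((norm_sub_le_norm_sub_add_norm_sub _ (K (z' i, z j)) _).trans
      (add_le_add (hK₁ _ _ _) (hK₂ _ _ _))) (hw₀ j)
  _ = (∑ j, w j) * (L * ‖z i - z' i‖) + L * ∑ j, w j * ‖z j - z' j‖ := by
    rw [Finset.sum_mul, Finset.mul_sum, ← Finset.sum_add_distrib]
    exact Finset.sum_congr rfl fun j _ => by ring
  _ = L * ‖z i - z' i‖ + L * ∑ j, w j * ‖z j - z' j‖ := by rw [hw₁, one_mul]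

theorem sum_mul_norm_meanFieldVelocity_sub_le
    (hK₁ : ∀ z' z₁ z₂, ‖K (z₁, z') - K (z₂, z')‖ ≤ L * ‖z₁ - z₂‖)
    (hK₂ : ∀ z z₁ z₂, ‖K (z, z₁) - K (z, z₂)‖ ≤ L * ‖z₁ - z₂‖)
    (hw₀ : ∀ i, 0 ≤ w i) (hw₁ : ∑ i, w i = 1) (z z' : ι → E) :
    ∑ i, w i * ‖meanFieldVelocity K w z i - meanFieldVelocity K w z' i‖
      ≤ 2 * L * ∑ i, w i * ‖z i - z' i‖ := calc
  _ ≤ ∑ i, w i * (L * ‖z i - z' i‖ + L * ∑ j, w j * ‖z j - z' j‖) :=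
    Finset.sum_le_sum fun i _ => mul_le_mul_of_nonneg_left
      (norm_meanFieldVelocity_sub_le hK₁ hK₂ hw₀ hw₁ z z' i) (hw₀ i)
  _ = L * ∑ i, w i * ‖z i - z' i‖ + (∑ i, w i) * (L * ∑ j, w j * ‖z j - z' j‖) := by
    rw [Finset.sum_mul, Finset.mul_sum, ← Finset.sum_add_distrib]
    exact Finset.sum_congr rfl fun i _ => by ring
  _ = 2 * L * ∑ i, w i * ‖z i - z' i‖ := by rw [hw₁]; ring

variable {Z Z' : ι → ℝ → E}

theorem IsMeanFieldTrajectory.sum_mul_norm_sub_le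
    (hK₁ : ∀ z' z₁ z₂, ‖K (z₁, z') - K (z₂, z')‖ ≤ L * ‖z₁ - z₂‖)
    (hK₂ : ∀ z z₁ z₂, ‖K (z, z₁) - K (z, z₂)‖ ≤ L * ‖z₁ - z₂‖)
    (hw₀ : ∀ i, 0 ≤ w i) (hw₁ : ∑ i, w i = 1)
    (hZ : IsMeanFieldTrajectory K w Z) (hZ' : IsMeanFieldTrajectory K w Z') (t : ℝ) :
    ∑ i, w i * ‖Z i t - Z' i t‖ ≤ Real.exp (2 * L * |t|) * ∑ i, w i * ‖Z i 0 - Z' i 0‖ := by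
  have hnorm (i : ι) (v : E) : ‖w i • v‖ = w i * ‖v‖ := by
    rw [norm_smul, Real.norm_of_nonneg (hw₀ i)]
  have hderiv (i : ι) (s : ℝ) : HasDerivAt (fun s => w i • (Z i s - Z' i s))
      (w i • (meanFieldVelocity K w (fun j => Z j s) i -
        meanFieldVelocity K w (fun j => Z' j s) i)) s :=
    ((hZ i s).sub (hZ' i s)).const_smul (w i)
  simpa only [hnorm] using sum_norm_le_exp_mul_abs_of_sum_norm_deriv_le hderiv (fun s => by
    simpa only [hnorm] using sum_mul_norm_meanFieldVelocity_sub_le hK₁ hK₂ hw₀ hw₁ _ _) t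

theorem continuous_of_isMeanFieldTrajectory
    (hK₁ : ∀ z' z₁ z₂, ‖K (z₁, z') - K (z₂, z')‖ ≤ L * ‖z₁ - z₂‖)
    (hK₂ : ∀ z z₁ z₂, ‖K (z, z₁) - K (z, z₂)‖ ≤ L * ‖z₁ - z₂‖)
    (hw₀ : ∀ i, 0 < w i) (hw₁ : ∑ i, w i = 1) {T : ℝ → (ι → E) → ι → E}
    (hT₀ : ∀ X, T 0 X = X) (hT : ∀ X, IsMeanFieldTrajectory K w fun i s => T s X i) (t : ℝ) :
    Continuous (T t) := by
  refine continuous_pi fun k => LipschitzWith.continuous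
    (K := (Real.exp (2 * L * |t|) / w k).toNNReal) (LipschitzWith.of_dist_le_mul fun X X' => ?_)
  have hdob := (hT X).sum_mul_norm_sub_le hK₁ hK₂ (fun i => (hw₀ i).le) hw₁ (hT X') t
  simp only [hT₀] at hdob
  rw [Real.coe_toNNReal _ (by have := hw₀ k; positivity), dist_eq_norm]
  calc ‖T t X k - T t X' k‖ = (w k)⁻¹ * (w k * ‖T t X k - T t X' k‖) := by
        field_simp [(hw₀ k).ne']
    _ ≤ (w k)⁻¹ * (Real.exp (2 * L * |t|) * ∑ i, w i * ‖X i - X' i‖) := by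
      refine mul_le_mul_of_nonneg_left ?_ (inv_pos.2 (hw₀ k)).le
      exact (Finset.single_le_sum (f := fun i => w i * ‖T t X i - T t X' i‖)
        (fun i _ => mul_nonneg (hw₀ i).le (norm_nonneg _)) (Finset.mem_univ k)).trans hdob
    _ ≤ (w k)⁻¹ * (Real.exp (2 * L * |t|) * ∑ i, w i * dist X X') := by
      gcongr with i
      · exact (inv_pos.2 (hw₀ k)).le
      · exact (hw₀ i).le
      · exact (dist_eq_norm (X i) (X' i)).symm.trans_le (dist_le_pi_dist X X' i)
    _ = Real.exp (2 * L * |t|) / w k * dist X X' := by rw [← Finset.sum_mul, hw₁]; ring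

end MeanField

section FiniteSupport

theorem MeasureTheory.Measure.map_sum_smul_dirac {α β ι : Type*} [MeasurableSpace α]
    [MeasurableSpace β] {f : α → β} (hf : Measurable f) (s : Finset ι) (c : ι → ℝ≥0∞)
    (x : ι → α) :
    (∑ i ∈ s, c i • dirac (x i)).map f = ∑ i ∈ s, c i • dirac (f (x i)) := by
  rw [← mapₗ_apply_of_measurable hf, _root_.map_sum]
  simp only [mapₗ_apply_of_measurable hf, Measure.map_smul, map_dirac' hf]

variable {α β G : Type*} [MeasurableSpace α] [MeasurableSpace β]
  [MeasurableSingletonClass α] [MeasurableSingletonClass β]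
  [NormedAddCommGroup G] [NormedSpace ℝ G] [CompleteSpace G]

theorem integral_eq_sum_of_measure_compl_eq_zero {μ : Measure α} [IsFiniteMeasure μ] {F : Finset α}
    (hF : μ (↑F)ᶜ = 0) (f : α → G) : ∫ x, f x ∂μ = ∑ x ∈ F, μ.real {x} • f x := by
  rw [← setIntegral_finset F IntegrableOn.finset, Measure.restrict_eq_self_of_ae_mem]
  exact ae_iff.2 hF

theorem sum_measureReal_singleton_prod_eq_map_fst (π : Measure (α × β)) [IsFiniteMeasure π]
    {T : Finset β} (hT : π.map Prod.snd (↑T)ᶜ = 0) (x : α) :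
    ∑ y ∈ T, π.real {(x, y)} = (π.map Prod.fst).real {x} := by
  have hT' : π (Prod.snd ⁻¹' ↑T)ᶜ = 0 := by
    rwa [← Set.preimage_compl, ← Measure.map_apply measurable_snd T.measurableSet.compl]
  rw [map_measureReal_apply measurable_fst (measurableSet_singleton x), measureReal_def,
    ← measure_inter_conull hT', ← Set.prod_eq, ← Finset.coe_singleton,
    ← Finset.coe_product, ← measureReal_def, ← sum_measureReal_singleton, Finset.sum_product,
    Finset.sum_singleton]

theorem sum_measureReal_singleton_prod_eq_map_snd (π : Measure (α × β)) [IsFiniteMeasure π]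
    {S : Finset α} (hS : π.map Prod.fst (↑S)ᶜ = 0) (y : β) :
    ∑ x ∈ S, π.real {(x, y)} = (π.map Prod.snd).real {y} := by
  have hS' : π (Prod.fst ⁻¹' ↑S)ᶜ = 0 := by
    rwa [← Set.preimage_compl, ← Measure.map_apply measurable_fst S.measurableSet.compl]
  rw [map_measureReal_apply measurable_snd (measurableSet_singleton y), measureReal_def,
    ← measure_inter_conull hS', Set.inter_comm, ← Set.prod_eq, ← Finset.coe_singleton,
    ← Finset.coe_product, ← measureReal_def, ← sum_measureReal_singleton, Finset.sum_product_right,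
    Finset.sum_singleton]

end FiniteSupport

theorem natCast_card_fiber_ne_zero {ι κ : Type*} [Fintype ι] [DecidableEq κ] (Z : ι → κ)
    (i : ι) : (#{j | Z j = Z i} : ℝ) ≠ 0 :=
  Nat.cast_ne_zero.2 (Finset.card_ne_zero.2 ⟨i, by simp⟩)

theorem Finset.sum_div_card_fiber {ι κ : Type*} [Fintype ι] [DecidableEq κ] (Z : ι → κ)
    (f : κ → ℝ) :
    ∑ i, f (Z i) / #{j | Z j = Z i} = ∑ z ∈ univ.image Z, f z := by
  rw [Finset.sum_comp (fun z => f z / #{j | Z j = z}) Z]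
  refine Finset.sum_congr rfl fun z hz => ?_
  obtain ⟨i, -, rfl⟩ := Finset.mem_image.1 hz
  rw [nsmul_eq_mul]
  field_simp [natCast_card_fiber_ne_zero Z i]

structure IsCouplingMatrix (M N : ℕ) (a : Fin M × Fin N → ℝ) : Prop where
  nonneg : ∀ p, 0 ≤ a p
  sum_row : ∀ k, ∑ l, a (k, l) = (M : ℝ)⁻¹
  sum_col : ∀ l, ∑ k, a (k, l) = (N : ℝ)⁻¹

theorem IsCouplingMatrix.sum_eq_one {M N : ℕ} {a : Fin M × Fin N → ℝ} (ha : IsCouplingMatrix M N a)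
    (hM : 0 < M) : ∑ p, a p = 1 := by
  simp [Fintype.sum_prod_type, ha.sum_row, hM.ne']

theorem isCouplingMatrix_const {M N : ℕ} (hM : 0 < M) (hN : 0 < N) :
    IsCouplingMatrix M N fun _ => ((M : ℝ) * N)⁻¹ where
  nonneg _ := by positivity
  sum_row _ := by simp [hN.ne']
  sum_col _ := by simp; field_simp

section Empirical

variable {E : Type*} [MeasurableSpace E] {M N : ℕ}

theorem isProbabilityMeasure_empiricalMeasure (hM : 0 < M) (X : Fin M → E) :
    IsProbabilityMeasure (empiricalMeasure X) :=
  ⟨by simp [empiricalMeasure, ENNReal.inv_mul_cancel, hM.ne']⟩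

variable [MeasurableSingletonClass E] [DecidableEq E]

theorem empiricalMeasure_singleton (X : Fin M → E) (x : E) :
    empiricalMeasure X {x} = (M : ℝ≥0∞)⁻¹ * #{k | X k = x} := by
  simp [empiricalMeasure, Set.indicator_apply, Finset.sum_boole]

theorem empiricalMeasure_compl_range (X : Fin M → E) :
    empiricalMeasure X (↑(univ.image X))ᶜ = 0 := by
  simp [empiricalMeasure, Measure.dirac_apply]

variable {X : Fin M → E} {Y : Fin N → E} {π : Measure (E × E)} [IsFiniteMeasure π]

/-- The mass of `π` at `(X k, Y l)`, shared equally among the indices carrying these points. -/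
noncomputable def couplingMatrixOf (π : Measure (E × E)) (X : Fin M → E) (Y : Fin N → E) :
    Fin M × Fin N → ℝ :=
  fun p => π.real {(X p.1, Y p.2)} / #{j | Y j = Y p.2} / #{j | X j = X p.1}

theorem isCouplingMatrix_couplingMatrixOf (h₁ : π.map Prod.fst = empiricalMeasure X)
    (h₂ : π.map Prod.snd = empiricalMeasure Y) : IsCouplingMatrix M N (couplingMatrixOf π X Y) := by
  have hS : π.map Prod.fst (↑(univ.image X))ᶜ = 0 := h₁ ▸ empiricalMeasure_compl_range X
  have hT : π.map Prod.snd (↑(univ.image Y))ᶜ = 0 := h₂ ▸ empiricalMeasure_compl_range Y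
  refine ⟨fun p => by simp only [couplingMatrixOf]; positivity, fun k => ?_, fun l => ?_⟩
  · simp only [couplingMatrixOf, ← Finset.sum_div]
    rw [Finset.sum_div_card_fiber Y (fun y => π.real {(X k, y)}),
      sum_measureReal_singleton_prod_eq_map_fst π hT, h₁, measureReal_def,
      empiricalMeasure_singleton]
    simp [natCast_card_fiber_ne_zero X k]
  · simp only [couplingMatrixOf, div_right_comm _ (#{j | Y j = Y l} : ℝ), ← Finset.sum_div]
    rw [Finset.sum_div_card_fiber X (fun x => π.real {(x, Y l)}),
      sum_measureReal_singleton_prod_eq_map_snd π hS, h₂, measureReal_def,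
      empiricalMeasure_singleton]
    simp [natCast_card_fiber_ne_zero Y l]

end Empirical

section Transport

variable {E : Type*} [PseudoMetricSpace E] {M N : ℕ}

def transportCost (X : Fin M → E) (Y : Fin N → E) (a : Fin M × Fin N → ℝ) : ℝ :=
  ∑ p, a p * dist (X p.1) (Y p.2)

theorem transportCost_le_add {a : Fin M × Fin N → ℝ} (ha : IsCouplingMatrix M N a)
    (X X' : Fin M → E) (Y Y' : Fin N → E) :
    transportCost X Y a ≤ transportCost X' Y' a +
      ((M : ℝ)⁻¹ * ∑ k, dist (X k) (X' k) + (N : ℝ)⁻¹ * ∑ l, dist (Y l) (Y' l)) := by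
  calc transportCost X Y a
      ≤ ∑ p, a p * (dist (X' p.1) (Y' p.2) + dist (X p.1) (X' p.1) + dist (Y p.2) (Y' p.2)) :=
        Finset.sum_le_sum fun p _ => mul_le_mul_of_nonneg_left
          ((dist_triangle4 _ (X' p.1) (Y' p.2) _).trans_eq (by rw [dist_comm (Y' _)]; ring))
          (ha.nonneg p)
    _ = _ := by
      simp only [transportCost, mul_add, Finset.sum_add_distrib, Fintype.sum_prod_type,
        ← Finset.sum_mul, ha.sum_row, Finset.mul_sum]
      rw [Finset.sum_comm (f := fun k l => a (k, l) * dist (Y l) (Y' l))]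
      simp only [← Finset.sum_mul, ha.sum_col]
      ring

end Transport

section W1

variable {E : Type*} [MeasurableSpace E] [PseudoMetricSpace E]

theorem W1_nonneg (μ ν : Measure E) : 0 ≤ W1 μ ν :=
  Real.sInf_nonneg fun _ ⟨_, _, _, hc⟩ => hc ▸ integral_nonneg fun _ => dist_nonneg

theorem W1_le_integral {μ ν : Measure E} {π : Measure (E × E)} (h₁ : π.map Prod.fst = μ)
    (h₂ : π.map Prod.snd = ν) : W1 μ ν ≤ ∫ p, dist p.1 p.2 ∂π :=
  csInf_le ⟨0, fun _ ⟨_, _, _, hc⟩ => hc ▸ integral_nonneg fun _ => dist_nonneg⟩ ⟨π, h₁, h₂, rfl⟩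

theorem le_W1 {μ ν : Measure E} [IsProbabilityMeasure μ] [IsProbabilityMeasure ν] {c : ℝ}
    (h : ∀ π : Measure (E × E), π.map Prod.fst = μ → π.map Prod.snd = ν →
      c ≤ ∫ p, dist p.1 p.2 ∂π) : c ≤ W1 μ ν :=
  le_csInf ⟨_, μ.prod ν, by simp, by simp, rfl⟩ fun _ ⟨π, h₁, h₂, hc⟩ => hc ▸ h π h₁ h₂

variable [MeasurableSingletonClass E] {M N : ℕ}

theorem W1_empiricalMeasure_le_transportCost (hM : 0 < M) (hN : 0 < N)
    {a : Fin M × Fin N → ℝ} (ha : IsCouplingMatrix M N a) (X : Fin M → E) (Y : Fin N → E) :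
    W1 (empiricalMeasure X) (empiricalMeasure Y) ≤ transportCost X Y a := by
  have hweight {K : ℕ} (hK : 0 < K) : ENNReal.ofReal (K : ℝ)⁻¹ = (K : ℝ≥0∞)⁻¹ := by
    rw [ENNReal.ofReal_inv_of_pos (Nat.cast_pos.2 hK), ENNReal.ofReal_natCast]
  refine (W1_le_integral
    (π := ∑ p, ENNReal.ofReal (a p) • Measure.dirac (X p.1, Y p.2)) ?_ ?_).trans_eq ?_
  · rw [Measure.map_sum_smul_dirac measurable_fst]
    simp only [Fintype.sum_prod_type, ← Finset.sum_smul,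
      ← ENNReal.ofReal_sum_of_nonneg fun _ _ => ha.nonneg _, ha.sum_row, hweight hM,
      empiricalMeasure, Finset.smul_sum]
  · rw [Measure.map_sum_smul_dirac measurable_snd]
    simp only [Fintype.sum_prod_type_right, ← Finset.sum_smul,
      ← ENNReal.ofReal_sum_of_nonneg fun _ _ => ha.nonneg _, ha.sum_col, hweight hN,
      empiricalMeasure, Finset.smul_sum]
  · rw [integral_finsetSum_measure fun p _ =>
      (integrable_dirac (by simp)).smul_measure ENNReal.ofReal_ne_top]
    simp [integral_smul_measure, integral_dirac, transportCost, ENNReal.toReal_ofReal (ha.nonneg _)]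

section CouplingMatrixOf

variable [DecidableEq E] {X : Fin M → E} {Y : Fin N → E} {π : Measure (E × E)} [IsFiniteMeasure π]

theorem transportCost_couplingMatrixOf (h₁ : π.map Prod.fst = empiricalMeasure X)
    (h₂ : π.map Prod.snd = empiricalMeasure Y) :
    transportCost X Y (couplingMatrixOf π X Y) = ∫ p, dist p.1 p.2 ∂π := by
  set S := univ.image X
  set T := univ.image Y
  have hST : π (↑(S ×ˢ T))ᶜ = 0 := by
    have hS : π.map Prod.fst (↑S)ᶜ = 0 := h₁ ▸ empiricalMeasure_compl_range X
    have hT : π.map Prod.snd (↑T)ᶜ = 0 := h₂ ▸ empiricalMeasure_compl_range Y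
    rw [Measure.map_apply measurable_fst S.measurableSet.compl] at hS
    rw [Measure.map_apply measurable_snd T.measurableSet.compl] at hT
    refine measure_mono_null (fun p hp => ?_) (measure_union_null hS hT)
    simpa [or_iff_not_imp_left] using hp
  calc transportCost X Y (couplingMatrixOf π X Y)
      = ∑ k, (∑ l, π.real {(X k, Y l)} * dist (X k) (Y l) / #{j | Y j = Y l})
          / #{j | X j = X k} := by
        simp only [transportCost, couplingMatrixOf, Fintype.sum_prod_type, Finset.sum_div]
        exact Finset.sum_congr rfl fun k _ => Finset.sum_congr rfl fun l _ => by ring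
    _ = ∑ k, (∑ y ∈ T, π.real {(X k, y)} * dist (X k) y) / #{j | X j = X k} :=
        Finset.sum_congr rfl fun k _ => by
          rw [Finset.sum_div_card_fiber Y (fun y => π.real {(X k, y)} * dist (X k) y)]
    _ = ∑ x ∈ S, ∑ y ∈ T, π.real {(x, y)} * dist x y :=
        Finset.sum_div_card_fiber X fun x => ∑ y ∈ T, π.real {(x, y)} * dist x y
    _ = ∫ p, dist p.1 p.2 ∂π := by
        rw [integral_eq_sum_of_measure_compl_eq_zero hST, Finset.sum_product]
        rfl

end CouplingMatrixOf

theorem le_W1_empiricalMeasure (hM : 0 < M) (hN : 0 < N) {X : Fin M → E} {Y : Fin N → E}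
    {c : ℝ} (h : ∀ a, IsCouplingMatrix M N a → c ≤ transportCost X Y a) :
    c ≤ W1 (empiricalMeasure X) (empiricalMeasure Y) := by
  have := isProbabilityMeasure_empiricalMeasure hM X
  have := isProbabilityMeasure_empiricalMeasure hN Y
  classical
  refine le_W1 fun π h₁ h₂ => ?_
  have : IsFiniteMeasure (π.map Prod.fst) := h₁ ▸ inferInstance
  have : IsFiniteMeasure π := Measure.isFiniteMeasure_of_map measurable_fst.aemeasurable
  rw [← transportCost_couplingMatrixOf h₁ h₂]
  exact h _ (isCouplingMatrix_couplingMatrixOf h₁ h₂)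

theorem W1_empiricalMeasure_le_add (hM : 0 < M) (hN : 0 < N)
    (X X' : Fin M → E) (Y Y' : Fin N → E) :
    W1 (empiricalMeasure X) (empiricalMeasure Y) ≤ W1 (empiricalMeasure X') (empiricalMeasure Y') +
      ((M : ℝ)⁻¹ * ∑ k, dist (X k) (X' k) + (N : ℝ)⁻¹ * ∑ l, dist (Y l) (Y' l)) := by
  rw [← sub_le_iff_le_add]
  exact le_W1_empiricalMeasure hM hN fun a ha => sub_le_iff_le_add.2 <|
    (W1_empiricalMeasure_le_transportCost hM hN ha X Y).trans (transportCost_le_add ha X X' Y Y')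

theorem lipschitzWith_W1_empiricalMeasure (hM : 0 < M) (hN : 0 < N) :
    LipschitzWith 2 fun p : (Fin M → E) × (Fin N → E) =>
      W1 (empiricalMeasure p.1) (empiricalMeasure p.2) := by
  have hmean {K : ℕ} (hK : 0 < K) (Z Z' : Fin K → E) :
      (K : ℝ)⁻¹ * ∑ k, dist (Z k) (Z' k) ≤ dist Z Z' := by
    rw [inv_mul_le_iff₀ (Nat.cast_pos.2 hK)]
    simpa using Finset.sum_le_sum fun k (_ : k ∈ univ) => dist_le_pi_dist Z Z' k
  refine LipschitzWith.of_le_add_mul 2 fun p q => ?_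
  have h₁ := (hmean hM p.1 q.1).trans ((le_max_left _ _).trans_eq Prod.dist_eq.symm)
  have h₂ := (hmean hN p.2 q.2).trans ((le_max_right _ _).trans_eq Prod.dist_eq.symm)
  push_cast
  linarith [W1_empiricalMeasure_le_add hM hN p.1 q.1 p.2 q.2]

end W1

section Flow

variable {E : Type*} [NormedAddCommGroup E] [NormedSpace ℝ E] [MeasurableSpace E]
  [MeasurableSingletonClass E] {M N : ℕ} {L : ℝ} {K : E × E → E}

theorem W1_empiricalMeasure_le_of_isMeanFieldTrajectory
    (hK₁ : ∀ z' z₁ z₂, ‖K (z₁, z') - K (z₂, z')‖ ≤ L * ‖z₁ - z₂‖)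
    (hK₂ : ∀ z z₁ z₂, ‖K (z, z₁) - K (z, z₂)‖ ≤ L * ‖z₁ - z₂‖)
    (hM : 0 < M) (hN : 0 < N) {x : Fin M → ℝ → E} {y : Fin N → ℝ → E}
    (hx : IsMeanFieldTrajectory K (fun _ => (M : ℝ)⁻¹) x)
    (hy : IsMeanFieldTrajectory K (fun _ => (N : ℝ)⁻¹) y) (t : ℝ) :
    W1 (empiricalMeasure fun k => x k t) (empiricalMeasure fun l => y l t) ≤
      Real.exp (2 * L * |t|) *
        W1 (empiricalMeasure fun k => x k 0) (empiricalMeasure fun l => y l 0) := by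
  rw [← inv_mul_le_iff₀ (Real.exp_pos _)]
  refine le_W1_empiricalMeasure hM hN fun a ha => ?_
  rw [inv_mul_le_iff₀ (Real.exp_pos _)]
  have hdob := (hx.comp_fst ha.sum_row).sum_mul_norm_sub_le hK₁ hK₂ ha.nonneg (ha.sum_eq_one hM)
    (hy.comp_snd ha.sum_col) t
  refine (W1_empiricalMeasure_le_transportCost hM hN ha _ _).trans ?_
  simpa only [transportCost, dist_eq_norm] using hdob

end Flow

section DistMK

variable {E : Type*} [MeasurableSpace E] {M N : ℕ}

section PseudoMetric

variable [PseudoMetricSpace E]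

theorem DistMK_le_integral {P : Measure (Fin M → E)} {Q : Measure (Fin N → E)}
    {ρ : Measure ((Fin M → E) × (Fin N → E))} (h₁ : ρ.map Prod.fst = P)
    (h₂ : ρ.map Prod.snd = Q) :
    DistMK P Q ≤ ∫ p, W1 (empiricalMeasure p.1) (empiricalMeasure p.2) ∂ρ :=
  csInf_le ⟨0, fun _ ⟨_, _, _, hc⟩ => hc ▸ integral_nonneg fun _ => W1_nonneg _ _⟩ ⟨ρ, h₁, h₂, rfl⟩

theorem le_DistMK {P : Measure (Fin M → E)} {Q : Measure (Fin N → E)} [IsProbabilityMeasure P]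
    [IsProbabilityMeasure Q] {c : ℝ}
    (h : ∀ ρ : Measure ((Fin M → E) × (Fin N → E)), ρ.map Prod.fst = P → ρ.map Prod.snd = Q →
      c ≤ ∫ p, W1 (empiricalMeasure p.1) (empiricalMeasure p.2) ∂ρ) :
    c ≤ DistMK P Q :=
  le_csInf ⟨_, P.prod Q, by simp, by simp, rfl⟩ fun _ ⟨ρ, h₁, h₂, hc⟩ => hc ▸ h ρ h₁ h₂

end PseudoMetric

variable [NormedAddCommGroup E] [MeasurableSingletonClass E]

theorem W1_empiricalMeasure_le_sum_norm (hM : 0 < M) (hN : 0 < N) (X : Fin M → E)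
    (Y : Fin N → E) :
    W1 (empiricalMeasure X) (empiricalMeasure Y) ≤
      (M : ℝ)⁻¹ * ∑ k, ‖X k‖ + (N : ℝ)⁻¹ * ∑ l, ‖Y l‖ := by
  refine (W1_empiricalMeasure_le_transportCost hM hN (isCouplingMatrix_const hM hN) X Y).trans ?_
  calc transportCost X Y (fun _ => ((M : ℝ) * N)⁻¹)
      ≤ ∑ p : Fin M × Fin N, ((M : ℝ) * N)⁻¹ * (‖X p.1‖ + ‖Y p.2‖) :=
        Finset.sum_le_sum fun p _ => by
          rw [dist_eq_norm]
          exact mul_le_mul_of_nonneg_left (norm_sub_le _ _) (by positivity)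
    _ = (M : ℝ)⁻¹ * ∑ k, ‖X k‖ + (N : ℝ)⁻¹ * ∑ l, ‖Y l‖ := by
      simp only [← Finset.mul_sum, Finset.sum_add_distrib, Fintype.sum_prod_type,
        Finset.sum_const, Finset.card_univ, Fintype.card_fin, nsmul_eq_mul]
      field_simp

variable [BorelSpace E] [SecondCountableTopology E]

theorem integrable_W1_empiricalMeasure (hM : 0 < M) (hN : 0 < N)
    {ρ : Measure ((Fin M → E) × (Fin N → E))}
    (hP : Integrable (fun X : Fin M → E => ∑ k, ‖X k‖) (ρ.map Prod.fst))
    (hQ : Integrable (fun Y : Fin N → E => ∑ l, ‖Y l‖) (ρ.map Prod.snd)) :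
    Integrable (fun p => W1 (empiricalMeasure p.1) (empiricalMeasure p.2)) ρ := by
  have hfst := (integrable_map_measure hP.1 measurable_fst.aemeasurable).1 hP
  have hsnd := (integrable_map_measure hQ.1 measurable_snd.aemeasurable).1 hQ
  refine ((hfst.const_mul (M : ℝ)⁻¹).add (hsnd.const_mul (N : ℝ)⁻¹)).mono'
    (lipschitzWith_W1_empiricalMeasure hM hN).continuous.aestronglyMeasurable
    (ae_of_all _ fun p => ?_)
  rw [Real.norm_of_nonneg (W1_nonneg _ _)]
  exact W1_empiricalMeasure_le_sum_norm hM hN p.1 p.2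

theorem DistMK_map_le (hM : 0 < M) (hN : 0 < N) {f : (Fin M → E) → Fin M → E}
    {g : (Fin N → E) → Fin N → E} (hf : Measurable f) (hg : Measurable g) {C : ℝ} (hC : 0 < C)
    (hfg : ∀ X Y, W1 (empiricalMeasure (f X)) (empiricalMeasure (g Y)) ≤
      C * W1 (empiricalMeasure X) (empiricalMeasure Y))
    {P : Measure (Fin M → E)} {Q : Measure (Fin N → E)} [IsProbabilityMeasure P]
    [IsProbabilityMeasure Q] (hP : Integrable (fun X => ∑ k, ‖X k‖) P)
    (hQ : Integrable (fun Y => ∑ l, ‖Y l‖) Q) :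
    DistMK (P.map f) (Q.map g) ≤ C * DistMK P Q := by
  rw [← inv_mul_le_iff₀ hC]
  refine le_DistMK fun ρ h₁ h₂ => ?_
  rw [inv_mul_le_iff₀ hC]
  have hF : Measurable (Prod.map f g) := hf.prodMap hg
  have hρ₁ : (ρ.map (Prod.map f g)).map Prod.fst = P.map f := by
    rw [Measure.map_map measurable_fst hF, ← h₁, Measure.map_map hf measurable_fst]
    rfl
  have hρ₂ : (ρ.map (Prod.map f g)).map Prod.snd = Q.map g := by
    rw [Measure.map_map measurable_snd hF, ← h₂, Measure.map_map hg measurable_snd]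
    rfl
  calc DistMK (P.map f) (Q.map g)
      ≤ ∫ p, W1 (empiricalMeasure p.1) (empiricalMeasure p.2) ∂(ρ.map (Prod.map f g)) :=
        DistMK_le_integral hρ₁ hρ₂
    _ = ∫ p, W1 (empiricalMeasure (f p.1)) (empiricalMeasure (g p.2)) ∂ρ :=
        integral_map hF.aemeasurable
          (lipschitzWith_W1_empiricalMeasure hM hN).continuous.aestronglyMeasurable
    _ ≤ ∫ p, C * W1 (empiricalMeasure p.1) (empiricalMeasure p.2) ∂ρ :=
        integral_mono_of_nonneg (ae_of_all _ fun _ => W1_nonneg _ _)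
          ((integrable_W1_empiricalMeasure hM hN (h₁ ▸ hP) (h₂ ▸ hQ)).const_mul C)
          (ae_of_all _ fun p => hfg p.1 p.2)
    _ = C * ∫ p, W1 (empiricalMeasure p.1) (empiricalMeasure p.2) ∂ρ := integral_const_mul C _

end DistMK

theorem stmt_15_general (d M N : ℕ) (hM : 0 < M) (hN : 0 < N) (L : ℝ)
    (K : EuclideanSpace ℝ (Fin d) × EuclideanSpace ℝ (Fin d) → EuclideanSpace ℝ (Fin d))
    (hKlip1 : ∀ z' z₁ z₂, ‖K (z₁, z') - K (z₂, z')‖ ≤ L * ‖z₁ - z₂‖)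
    (hKlip2 : ∀ z z₁ z₂, ‖K (z, z₁) - K (z, z₂)‖ ≤ L * ‖z₁ - z₂‖)
    -- the `M`- and `N`-particle flows
    (TM : ℝ → (Fin M → EuclideanSpace ℝ (Fin d)) → (Fin M → EuclideanSpace ℝ (Fin d)))
    (TN : ℝ → (Fin N → EuclideanSpace ℝ (Fin d)) → (Fin N → EuclideanSpace ℝ (Fin d)))
    (hTM0 : ∀ X, TM 0 X = X) (hTN0 : ∀ Y, TN 0 Y = Y)
    (hODEM : ∀ X k t, HasDerivAt (fun s => TM s X k)
      ((M : ℝ)⁻¹ • ∑ l, K (TM t X k, TM t X l)) t)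
    (hODEN : ∀ Y k t, HasDerivAt (fun s => TN s Y k)
      ((N : ℝ)⁻¹ • ∑ l, K (TN t Y k, TN t Y l)) t)
    -- symmetric initial data with finite first moments
    (Pin : Measure (Fin M → EuclideanSpace ℝ (Fin d))) [IsProbabilityMeasure Pin]
    (Qin : Measure (Fin N → EuclideanSpace ℝ (Fin d))) [IsProbabilityMeasure Qin]
    (hPmom : Integrable (fun X : Fin M → EuclideanSpace ℝ (Fin d) => ∑ k, ‖X k‖) Pin)
    (hQmom : Integrable (fun Y : Fin N → EuclideanSpace ℝ (Fin d) => ∑ k, ‖Y k‖) Qin) :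
    ∀ t : ℝ, DistMK (Pin.map (TM t)) (Qin.map (TN t)) ≤
      Real.exp (2 * L * |t|) * DistMK Pin Qin := by
  intro t
  have hM' (X) : IsMeanFieldTrajectory K (fun _ => (M : ℝ)⁻¹) fun k s => TM s X k :=
    isMeanFieldTrajectory_const_iff.2 (hODEM X)
  have hN' (Y) : IsMeanFieldTrajectory K (fun _ => (N : ℝ)⁻¹) fun l s => TN s Y l :=
    isMeanFieldTrajectory_const_iff.2 (hODEN Y)
  have hTM := continuous_of_isMeanFieldTrajectory hKlip1 hKlip2 (fun _ => by positivity)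
    (by simp [hM.ne']) hTM0 hM' t
  have hTN := continuous_of_isMeanFieldTrajectory hKlip1 hKlip2 (fun _ => by positivity)
    (by simp [hN.ne']) hTN0 hN' t
  refine DistMK_map_le hM hN hTM.measurable hTN.measurable (Real.exp_pos _) (fun X Y => ?_)
    hPmom hQmom
  simpa only [hTM0, hTN0] using
    W1_empiricalMeasure_le_of_isMeanFieldTrajectory hKlip1 hKlip2 hM hN (hM' X) (hN' Y) t

/-- Uniform-in-the-number-of-particles stability of the BBGKY hierarchy:
`Dist_{MK,1}(P_M(t), Q_N(t)) ≤ e^{2L|t|} Dist_{MK,1}(P_M^in, Q_N^in)`. -/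
theorem stmt_15 (d M N : ℕ) (hM : 0 < M) (hN : 0 < N) (L : ℝ) (hL : 0 < L)
    (K : EuclideanSpace ℝ (Fin d) × EuclideanSpace ℝ (Fin d) → EuclideanSpace ℝ (Fin d))
    (hKcont : Continuous K)
    (hKanti : ∀ z z', K (z, z') + K (z', z) = 0)
    (hKlip1 : ∀ z' z₁ z₂, ‖K (z₁, z') - K (z₂, z')‖ ≤ L * ‖z₁ - z₂‖)
    (hKlip2 : ∀ z z₁ z₂, ‖K (z, z₁) - K (z, z₂)‖ ≤ L * ‖z₁ - z₂‖)
    -- the `M`- and `N`-particle flows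
    (TM : ℝ → (Fin M → EuclideanSpace ℝ (Fin d)) → (Fin M → EuclideanSpace ℝ (Fin d)))
    (TN : ℝ → (Fin N → EuclideanSpace ℝ (Fin d)) → (Fin N → EuclideanSpace ℝ (Fin d)))
    (hTM0 : ∀ X, TM 0 X = X) (hTN0 : ∀ Y, TN 0 Y = Y)
    (hODEM : ∀ X k t, HasDerivAt (fun s => TM s X k)
      ((M : ℝ)⁻¹ • ∑ l, K (TM t X k, TM t X l)) t)
    (hODEN : ∀ Y k t, HasDerivAt (fun s => TN s Y k)
      ((N : ℝ)⁻¹ • ∑ l, K (TN t Y k, TN t Y l)) t)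
    -- symmetric initial data with finite first moments
    (Pin : Measure (Fin M → EuclideanSpace ℝ (Fin d))) [IsProbabilityMeasure Pin]
    (Qin : Measure (Fin N → EuclideanSpace ℝ (Fin d))) [IsProbabilityMeasure Qin]
    (hPsym : ∀ σ : Equiv.Perm (Fin M), Pin.map (fun X => X ∘ σ) = Pin)
    (hQsym : ∀ σ : Equiv.Perm (Fin N), Qin.map (fun Y => Y ∘ σ) = Qin)
    (hPmom : Integrable (fun X : Fin M → EuclideanSpace ℝ (Fin d) => ∑ k, ‖X k‖) Pin)
    (hQmom : Integrable (fun Y : Fin N → EuclideanSpace ℝ (Fin d) => ∑ k, ‖Y k‖) Qin) :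
    ∀ t : ℝ, DistMK (Pin.map (TM t)) (Qin.map (TN t)) ≤
      Real.exp (2 * L * |t|) * DistMK Pin Qin :=
  stmt_15_general d M N hM hN L K hKlip1 hKlip2 TM TN hTM0 hTN0 hODEM hODEN Pin Qin hPmom hQmom
end

section
/- Let T^n_t denote the flow of ż_k = (1/n)∑_{l=1}^n K(z_k, z_l) on (ℝ^d)^n, where K is L-Lipschitz in each variable uniformly in the other. Let α_{lk}(t) be the sup norm over (ℝ^d)^n of the (l,k)-block of the Jacobian matrix of T^n_t. Then α_{lk}(t) ≤ δ_{lk} e^{L|t|} + (1/(2n)) e^{3L|t|} for all k, l = 1,…,n and t ∈ ℝ. -/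
/-!
Compare two solutions started at `Z` and at `W`. The total deviation
`β = ∑ₘ ‖Zₘ(t) - Wₘ(t)‖` satisfies `β' ≤ 2Lβ`, so `β(t) ≤ e^{2Lt} β(0)`. The deviation of a
single particle then satisfies `‖f'‖ ≤ L‖f‖ + (L/n) β(0) e^{2Lt}`, and comparison with the
explicit solution of the corresponding linear equation gives
`‖f(t)‖ ≤ ‖f(0)‖ e^{Lt} + (β(0)/n) e^{Lt} (e^{Lt} - 1)`.
Moving only particle `k` makes `β(0) = ‖v‖` and `‖f(0)‖ = δₗₖ ‖v‖`; this Lipschitz bound in the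
initial data bounds the `(l,k)` block of the Jacobian, and `e^{x}(e^{x} - 1) ≤ e^{3x}/2`.
Negative times follow by reversing time, which replaces `K` by `-K`.
-/

open Set Real Finset

theorem norm_le_of_norm_deriv_le_of_supersolution {E : Type*} [NormedAddCommGroup E]
    [NormedSpace ℝ E] {f f' : ℝ → E} {B B' g : ℝ → ℝ} {L a b : ℝ}
    (hf : ContinuousOn f (Icc a b)) (hf' : ∀ x ∈ Ico a b, HasDerivWithinAt f (f' x) (Ici x) x)
    (hB : ∀ x, HasDerivAt B (B' x) x) (ha : ‖f a‖ ≤ B a)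
    (hf'_le : ∀ x ∈ Ico a b, ‖f' x‖ ≤ L * ‖f x‖ + g x)
    (hB' : ∀ x ∈ Ico a b, L * B x + g x ≤ B' x) :
    ∀ ⦃x⦄, x ∈ Icc a b → ‖f x‖ ≤ B x := by
  intro x hx
  -- `B + ε e^{(L+1)x}` is a strict supersolution, to which the fencing theorem applies.
  have hfence : ∀ ε > 0, ‖f x‖ ≤ B x + ε * exp ((L + 1) * x) := by
    intro ε hε
    have hexp : ∀ y, HasDerivAt (fun y => ε * exp ((L + 1) * y))
        (ε * (exp ((L + 1) * y) * (L + 1))) y := fun y =>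
      (((hasDerivAt_id y).const_mul (L + 1)).exp.const_mul ε).congr_deriv (by simp)
    have hBε : ∀ y, HasDerivAt (fun y => B y + ε * exp ((L + 1) * y))
        (B' y + ε * (exp ((L + 1) * y) * (L + 1))) y := fun y => (hB y).add (hexp y)
    refine image_norm_le_of_norm_deriv_right_lt_deriv_boundary hf hf' ?_ hBε ?_ hx
    · nlinarith [exp_pos ((L + 1) * a)]
    · intro y hy hfy
      have := exp_pos ((L + 1) * y)
      calc ‖f' y‖ ≤ L * ‖f y‖ + g y := hf'_le y hy
        _ = L * B y + g y + L * (ε * exp ((L + 1) * y)) := by rw [hfy]; ring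
        _ < B' y + ε * (exp ((L + 1) * y) * (L + 1)) := by nlinarith [hB' y hy]
  refine le_of_forall_pos_le_add fun ε hε => ?_
  have hpos := exp_pos ((L + 1) * x)
  simpa [div_mul_cancel₀ ε hpos.ne'] using hfence (ε / exp ((L + 1) * x)) (by positivity)

theorem norm_sub_le_of_separately_lipschitz {E₁ E₂ F : Type*} [SeminormedAddCommGroup E₁]
    [SeminormedAddCommGroup E₂] [SeminormedAddCommGroup F] {K : E₁ × E₂ → F} {L : ℝ}
    (hK₁ : ∀ z' z₁ z₂, ‖K (z₁, z') - K (z₂, z')‖ ≤ L * ‖z₁ - z₂‖)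
    (hK₂ : ∀ z z₁ z₂, ‖K (z, z₁) - K (z, z₂)‖ ≤ L * ‖z₁ - z₂‖) (a : E₁) (b : E₂) (c : E₁) (d : E₂) :
    ‖K (a, b) - K (c, d)‖ ≤ L * ‖a - c‖ + L * ‖b - d‖ :=
  (norm_sub_le_norm_sub_add_norm_sub _ (K (c, b)) _).trans (add_le_add (hK₁ b a c) (hK₂ c b d))

theorem exp_mul_exp_sub_one_le (x : ℝ) : exp x * (exp x - 1) ≤ exp (3 * x) / 2 := by
  have h3 : exp (3 * x) = exp x ^ 3 := by rw [← exp_nat_mul]; norm_num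
  rw [h3]
  nlinarith [exp_pos x, mul_nonneg (exp_pos x).le (sq_nonneg (exp x - 1))]

theorem norm_fderiv_apply_single_le {𝕜 ι F : Type*} [NontriviallyNormedField 𝕜] [Fintype ι]
    [DecidableEq ι] {E : ι → Type*} [∀ i, NormedAddCommGroup (E i)] [∀ i, NormedSpace 𝕜 (E i)]
    [NormedAddCommGroup F] [NormedSpace 𝕜 F] {f : (∀ i, E i) → F} {x : ∀ i, E i}
    (hf : DifferentiableAt 𝕜 f x) {k : ι} {C : ℝ} (hC : 0 ≤ C)
    (hlip : ∀ w : E k, ‖f (x + Pi.single k w) - f x‖ ≤ C * ‖w‖) (v : E k) :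
    ‖fderiv 𝕜 f x (Pi.single k v)‖ ≤ C * ‖v‖ := by
  set ι_k := ContinuousLinearMap.single 𝕜 E k
  have hline : HasFDerivAt (fun w => x + Pi.single k w) ι_k 0 := ι_k.hasFDerivAt.const_add x
  have hpartial : HasFDerivAt (fun w => f (x + Pi.single k w)) ((fderiv 𝕜 f x).comp ι_k) 0 :=
    (by simpa using hf.hasFDerivAt : HasFDerivAt f _ (x + Pi.single k 0)).comp 0 hline
  have hnorm := hpartial.le_of_lip' hC (Filter.Eventually.of_forall fun w => by simpa using hlip w)
  calc ‖fderiv 𝕜 f x (Pi.single k v)‖ = ‖(fderiv 𝕜 f x).comp ι_k v‖ := rfl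
    _ ≤ ‖(fderiv 𝕜 f x).comp ι_k‖ * ‖v‖ := ContinuousLinearMap.le_opNorm _ _
    _ ≤ C * ‖v‖ := by gcongr

section MeanField

variable {E : Type*} [NormedAddCommGroup E] [NormedSpace ℝ E] {n : ℕ}

noncomputable def meanField (K : E × E → E) (x : Fin n → E) (m : Fin n) : E :=
  (n : ℝ)⁻¹ • ∑ j, K (x m, x j)

def IsMeanFieldFlow (K : E × E → E) (T : ℝ → (Fin n → E) → (Fin n → E)) : Prop :=
  ∀ Z m t, HasDerivAt (fun s => T s Z m) (meanField K (T t Z) m) t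

variable {K : E × E → E} {L : ℝ} {T : ℝ → (Fin n → E) → (Fin n → E)}

theorem meanField_neg (x : Fin n → E) (m : Fin n) : meanField (-K) x m = -meanField K x m := by
  simp [meanField, sum_neg_distrib]

theorem IsMeanFieldFlow.time_reversal (hT : IsMeanFieldFlow K T) :
    IsMeanFieldFlow (-K) fun s => T (-s) := fun Z m t => by
  simpa [Function.comp_def, meanField_neg] using (hT Z m (-t)).scomp t (hasDerivAt_neg t)

theorem norm_meanField_sub_le
    (hK : ∀ a b c d, ‖K (a, b) - K (c, d)‖ ≤ L * ‖a - c‖ + L * ‖b - d‖)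
    (x y : Fin n → E) (m : Fin n) :
    ‖meanField K x m - meanField K y m‖ ≤ L * ‖x m - y m‖ + L / n * ∑ j, ‖x j - y j‖ := by
  have hn : (n : ℝ) ≠ 0 := (Nat.cast_pos.2 m.pos).ne'
  calc ‖meanField K x m - meanField K y m‖
      = (n : ℝ)⁻¹ * ‖∑ j, (K (x m, x j) - K (y m, y j))‖ := by
        rw [meanField, meanField, ← smul_sub, ← sum_sub_distrib, norm_smul, norm_inv,
          Real.norm_natCast]
    _ ≤ (n : ℝ)⁻¹ * ∑ j, (L * ‖x m - y m‖ + L * ‖x j - y j‖) := by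
        gcongr
        exact (norm_sum_le _ _).trans (sum_le_sum fun j _ => hK _ _ _ _)
    _ = L * ‖x m - y m‖ + L / n * ∑ j, ‖x j - y j‖ := by
        rw [sum_add_distrib, sum_const, card_univ, Fintype.card_fin, nsmul_eq_mul, ← mul_sum]
        field_simp

theorem sum_norm_meanField_sub_le
    (hK : ∀ a b c d, ‖K (a, b) - K (c, d)‖ ≤ L * ‖a - c‖ + L * ‖b - d‖) (x y : Fin n → E) :
    ∑ m, ‖meanField K x m - meanField K y m‖ ≤ 2 * L * ∑ m, ‖x m - y m‖ := by
  rcases Nat.eq_zero_or_pos n with rfl | hn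
  · simp
  calc ∑ m, ‖meanField K x m - meanField K y m‖
      ≤ ∑ m, (L * ‖x m - y m‖ + L / n * ∑ j, ‖x j - y j‖) :=
        sum_le_sum fun m _ => norm_meanField_sub_le hK x y m
    _ = 2 * L * ∑ m, ‖x m - y m‖ := by
        rw [sum_add_distrib, sum_const, card_univ, Fintype.card_fin, nsmul_eq_mul, ← mul_sum]
        field_simp
        ring

theorem sum_norm_flow_sub_le
    (hK : ∀ a b c d, ‖K (a, b) - K (c, d)‖ ≤ L * ‖a - c‖ + L * ‖b - d‖)
    (hT : IsMeanFieldFlow K T) (hT0 : ∀ Z, T 0 Z = Z) {t : ℝ} (ht : 0 ≤ t) (Z W : Fin n → E) :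
    ∑ m, ‖T t Z m - T t W m‖ ≤ (∑ m, ‖Z m - W m‖) * exp (2 * L * t) := by
  -- the total deviation is the norm of `T s Z - T s W` in `ℓ¹(Fin n; E)`
  set F : ℝ → PiLp 1 (fun _ : Fin n => E) := fun s => WithLp.toLp 1 (T s Z - T s W)
  have hF : ∀ s, ‖F s‖ = ∑ m, ‖T s Z m - T s W m‖ := fun s => by simp [F, PiLp.norm_eq_of_L1]
  set F' : ℝ → PiLp 1 (fun _ : Fin n => E) :=
    fun s => WithLp.toLp 1 (fun m => meanField K (T s Z) m - meanField K (T s W) m)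
  have hF' : ∀ s, HasDerivAt F (F' s) s := fun s =>
    (PiLp.continuousLinearEquiv 1 ℝ _).symm.hasFDerivAt.comp_hasDerivAt s
      (hasDerivAt_pi.2 fun m => (hT Z m s).sub (hT W m s))
  have hexp : ∀ s, HasDerivAt (fun s => (∑ m, ‖Z m - W m‖) * exp (2 * L * s))
      (2 * L * ((∑ m, ‖Z m - W m‖) * exp (2 * L * s))) s := fun s =>
    (((hasDerivAt_id s).const_mul (2 * L)).exp.const_mul _).congr_deriv (by simp; ring)
  rw [← hF]
  refine norm_le_of_norm_deriv_le_of_supersolution (L := 2 * L) (g := 0)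
    (fun s _ => (hF' s).continuousAt.continuousWithinAt) (fun s _ => (hF' s).hasDerivWithinAt)
    hexp (by simp [hF, hT0]) (fun s _ => ?_) (fun s _ => by simp) (right_mem_Icc.2 ht)
  simpa [hF, F', PiLp.norm_eq_of_L1] using sum_norm_meanField_sub_le hK (T s Z) (T s W)

theorem norm_flow_sub_le_of_nonneg (hL : 0 ≤ L)
    (hK : ∀ a b c d, ‖K (a, b) - K (c, d)‖ ≤ L * ‖a - c‖ + L * ‖b - d‖)
    (hT : IsMeanFieldFlow K T) (hT0 : ∀ Z, T 0 Z = Z) {t : ℝ} (ht : 0 ≤ t) (Z W : Fin n → E)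
    (l : Fin n) :
    ‖T t Z l - T t W l‖ ≤ ‖Z l - W l‖ * exp (L * t) +
      (∑ m, ‖Z m - W m‖) / n * (exp (L * t) * (exp (L * t) - 1)) := by
  set δ := ‖Z l - W l‖
  set Δ := ∑ m, ‖Z m - W m‖
  set B : ℝ → ℝ := fun s => (δ - Δ / n) * exp (L * s) + Δ / n * exp (2 * L * s)
  have hB : ∀ s, HasDerivAt B (L * B s + L / n * Δ * exp (2 * L * s)) s := fun s =>
    ((((hasDerivAt_id s).const_mul L).exp.const_mul _).add
      (((hasDerivAt_id s).const_mul (2 * L)).exp.const_mul _)).congr_deriv (by simp [B]; ring)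
  have hexp2 : ∀ s, exp (2 * L * s) = exp (L * s) * exp (L * s) := fun s => by
    rw [← exp_add]; ring_nf
  have hfd : ∀ s, HasDerivAt (fun s => T s Z l - T s W l)
      (meanField K (T s Z) l - meanField K (T s W) l) s := fun s => (hT Z l s).sub (hT W l s)
  have hmain := norm_le_of_norm_deriv_le_of_supersolution
    (fun s _ => (hfd s).continuousAt.continuousWithinAt) (fun s _ => (hfd s).hasDerivWithinAt)
    hB (by simp [B, δ, hT0]) (fun s hs => ?_) (fun s _ => le_rfl) (right_mem_Icc.2 ht)
  · calc ‖T t Z l - T t W l‖ ≤ B t := hmain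
      _ = _ := by simp only [B, hexp2]; ring
  · calc ‖meanField K (T s Z) l - meanField K (T s W) l‖
        ≤ L * ‖T s Z l - T s W l‖ + L / n * ∑ m, ‖T s Z m - T s W m‖ :=
          norm_meanField_sub_le hK _ _ l
      _ ≤ L * ‖T s Z l - T s W l‖ + L / n * Δ * exp (2 * L * s) := by
          rw [mul_assoc (L / n)]
          gcongr
          exact sum_norm_flow_sub_le hK hT hT0 hs.1 Z W

theorem norm_flow_sub_le (hL : 0 ≤ L)
    (hK : ∀ a b c d, ‖K (a, b) - K (c, d)‖ ≤ L * ‖a - c‖ + L * ‖b - d‖)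
    (hT : IsMeanFieldFlow K T) (hT0 : ∀ Z, T 0 Z = Z) (t : ℝ) (Z W : Fin n → E) (l : Fin n) :
    ‖T t Z l - T t W l‖ ≤ ‖Z l - W l‖ * exp (L * |t|) +
      (∑ m, ‖Z m - W m‖) / n * (exp (L * |t|) * (exp (L * |t|) - 1)) := by
  rcases le_or_gt 0 t with ht | ht
  · rw [abs_of_nonneg ht]
    exact norm_flow_sub_le_of_nonneg hL hK hT hT0 ht Z W l
  · have hK' : ∀ a b c d, ‖(-K) (a, b) - (-K) (c, d)‖ ≤ L * ‖a - c‖ + L * ‖b - d‖ :=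
      fun a b c d => by simpa only [Pi.neg_apply, neg_sub_neg, norm_sub_rev] using hK a b c d
    rw [abs_of_neg ht]
    simpa using norm_flow_sub_le_of_nonneg hL hK' hT.time_reversal (by simpa using hT0)
      (neg_nonneg.2 ht.le) Z W l

end MeanField

theorem stmt_17_general (d n : ℕ) (L : ℝ) (hL : 0 < L)
    (K : EuclideanSpace ℝ (Fin d) × EuclideanSpace ℝ (Fin d) → EuclideanSpace ℝ (Fin d))
    (hKlip1 : ∀ z' z₁ z₂, ‖K (z₁, z') - K (z₂, z')‖ ≤ L * ‖z₁ - z₂‖)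
    (hKlip2 : ∀ z z₁ z₂, ‖K (z, z₁) - K (z, z₂)‖ ≤ L * ‖z₁ - z₂‖)
    -- the `n`-particle flow `T^n_t`
    (T : ℝ → (Fin n → EuclideanSpace ℝ (Fin d)) → (Fin n → EuclideanSpace ℝ (Fin d)))
    (hT0 : ∀ Z, T 0 Z = Z)
    (hODE : ∀ Z k t, HasDerivAt (fun s => T s Z k)
      ((n : ℝ)⁻¹ • ∑ l, K (T t Z k, T t Z l)) t)
    -- differentiability of the flow with respect to the initial data
    (hTdiff : ∀ t l, Differentiable ℝ (fun Z => T t Z l)) :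
    ∀ (t : ℝ) (l k : Fin n) (Z : Fin n → EuclideanSpace ℝ (Fin d))
      (v : EuclideanSpace ℝ (Fin d)),
      ‖fderiv ℝ (fun W => T t W l) Z (Pi.single k v)‖ ≤
        ((if l = k then 1 else 0) * Real.exp (L * |t|) +
          (1 / (2 * n)) * Real.exp (3 * L * |t|)) * ‖v‖ := by
  intro t l k Z v
  have hK := norm_sub_le_of_separately_lipschitz hKlip1 hKlip2
  refine norm_fderiv_apply_single_le (hTdiff t l Z) (by positivity) (fun w => ?_) v
  have hflow := norm_flow_sub_le hL.le hK hODE hT0 t (Z + Pi.single k w : Fin n → _) Z l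
  simp only [Pi.add_apply, add_sub_cancel_left, Pi.single_apply, apply_ite norm, norm_zero,
    sum_ite_eq', Finset.mem_univ, if_true] at hflow
  have hexp : ‖w‖ / n * (exp (L * |t|) * (exp (L * |t|) - 1)) ≤
      1 / (2 * n) * exp (3 * L * |t|) * ‖w‖ := by
    calc ‖w‖ / n * (exp (L * |t|) * (exp (L * |t|) - 1))
        ≤ ‖w‖ / n * (exp (3 * (L * |t|)) / 2) := by gcongr; exact exp_mul_exp_sub_one_le _
      _ = 1 / (2 * n) * exp (3 * L * |t|) * ‖w‖ := by rw [mul_assoc 3]; ring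
  split_ifs at hflow ⊢ <;> linarith

/-- Jacobian bound for the `n`-particle mean-field flow: if `T^n_t` is the flow of
`żₖ = (1/n) ∑_l K(zₖ, z_l)` with `K` `L`-Lipschitz in each variable uniformly in the
other, then the `(l,k)`-block of the Jacobian of `T^n_t` satisfies
`α_{lk}(t) ≤ δ_{lk} e^{L|t|} + (1/(2n)) e^{3L|t|}`. -/
theorem stmt_17 (d n : ℕ) (hn : 0 < n) (L : ℝ) (hL : 0 < L)
    (K : EuclideanSpace ℝ (Fin d) × EuclideanSpace ℝ (Fin d) → EuclideanSpace ℝ (Fin d))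
    (hKcont : Continuous K)
    (hKlip1 : ∀ z' z₁ z₂, ‖K (z₁, z') - K (z₂, z')‖ ≤ L * ‖z₁ - z₂‖)
    (hKlip2 : ∀ z z₁ z₂, ‖K (z, z₁) - K (z, z₂)‖ ≤ L * ‖z₁ - z₂‖)
    -- the `n`-particle flow `T^n_t`
    (T : ℝ → (Fin n → EuclideanSpace ℝ (Fin d)) → (Fin n → EuclideanSpace ℝ (Fin d)))
    (hT0 : ∀ Z, T 0 Z = Z)
    (hODE : ∀ Z k t, HasDerivAt (fun s => T s Z k)
      ((n : ℝ)⁻¹ • ∑ l, K (T t Z k, T t Z l)) t)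
    -- differentiability of the flow with respect to the initial data
    (hTdiff : ∀ t l, Differentiable ℝ (fun Z => T t Z l)) :
    ∀ (t : ℝ) (l k : Fin n) (Z : Fin n → EuclideanSpace ℝ (Fin d))
      (v : EuclideanSpace ℝ (Fin d)),
      ‖fderiv ℝ (fun W => T t W l) Z (Pi.single k v)‖ ≤
        ((if l = k then 1 else 0) * Real.exp (L * |t|) +
          (1 / (2 * n)) * Real.exp (3 * L * |t|)) * ‖v‖ :=
  stmt_17_general d n L hL K hKlip1 hKlip2 T hT0 hODE hTdiff
end
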